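/- For every ω ∈ ℝ, let ψ' ∈ ℂ^{({0,1}×{0,1})×({0,1}×{0,1})} be the unit vector ψ' = (1/2)·[ |0⟩⊗|+⟩⊗|00⟩ + |1⟩⊗|+⟩⊗|01⟩ + |+⟩⊗|0⟩⊗|10⟩ + ((|0⟩ + e^{iω}|1⟩)/√2)⊗|1⟩⊗|11⟩ ], where |+⟩ = (|0⟩+|1⟩)/√2 and the first two tensor factors form Alice's register and the last two form Bob's register. Then the reduced density matrix ρ_A ∈ Matrix ({0,1}×{0,1}) ({0,1}×{0,1}) ℂ with entries ρ_A(a,a') = Σ_b ψ'(a,b)·conj(ψ'(a',b)) has eigenvalues, counted with multiplicity, equal to the multiset {(1/4)(1+cos(ω/4)), (1/4)(1−cos(ω/4)), (1/4)(1+sin(ω/4)), (1/4)(1−sin(ω/4))}. -/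

import Mathlib

open scoped BigOperators
open Matrix

noncomputable section

/-- The state `ψ' = (1/2)·[|0⟩⊗|+⟩⊗|00⟩ + |1⟩⊗|+⟩⊗|01⟩ + |+⟩⊗|0⟩⊗|10⟩ +
((|0⟩+e^{iω}|1⟩)/√2)⊗|1⟩⊗|11⟩]`, with Alice's register the first two tensor factors and
Bob's register the last two. -/
def psi' (ω : ℝ) : (Bool × Bool) × (Bool × Bool) → ℂ := fun p =>
  (1 / 2 : ℂ) *
    ((if p.1.1 = false then 1 else 0) * ((1 : ℂ) / (Real.sqrt 2 : ℂ)) *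
        (if p.2 = (false, false) then 1 else 0) +
      (if p.1.1 = true then 1 else 0) * ((1 : ℂ) / (Real.sqrt 2 : ℂ)) *
        (if p.2 = (false, true) then 1 else 0) +
      ((1 : ℂ) / (Real.sqrt 2 : ℂ)) * (if p.1.2 = false then 1 else 0) *
        (if p.2 = (true, false) then 1 else 0) +
      ((if p.1.1 = false then 1 else Complex.exp (Complex.I * ω)) / (Real.sqrt 2 : ℂ)) *
        (if p.1.2 = true then 1 else 0) * (if p.2 = (true, true) then 1 else 0))

/-- The reduced density matrix `ρ_A` of `ψ'` on Alice's register. -/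
def rhoApsi' (ω : ℝ) : Matrix (Bool × Bool) (Bool × Bool) ℂ :=
  Matrix.of fun a a' => ∑ b, psi' ω (a, b) * star (psi' ω (a', b))

/-! With Alice's basis ordered `00, 01, 10, 11`, `8 ρ_A - 2` is the adjacency matrix of the
4-cycle `00 – 01 – 11 – 10 – 00` whose edge `01 – 11` carries the phase `e^{iω}`; its eigenvalues
are `2 cos ((ω + 2πk) / 4)`, `k = 0, …, 3`. We check this on the characteristic polynomial: with
`y = x - 1/4` it is `y⁴ - y²/16 + (1 - cos ω)/2048`, which factors as
`(y² - cos² (ω/4) / 16) (y² - sin² (ω/4) / 16)` because `cos ω = 1 - 8 sin² (ω/4) cos² (ω/4)`. -/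

open Polynomial

theorem Matrix.IsHermitian.eigenvalues_eq_of_charpoly_eq {𝕜 n : Type*} [RCLike 𝕜] [Fintype n]
    [DecidableEq n] {A : Matrix n n 𝕜} (hA : A.IsHermitian) {s : Multiset ℝ}
    (h : A.charpoly = (s.map fun r : ℝ => X - C (r : 𝕜)).prod) :
    Multiset.map hA.eigenvalues Finset.univ.val = s := by
  have hroots : A.charpoly.roots = s.map ((↑) : ℝ → 𝕜) := by
    simpa [h, Multiset.map_map] using roots_multiset_prod_X_sub_C (s.map ((↑) : ℝ → 𝕜))
  rw [hA.roots_charpoly_eq_eigenvalues, ← Multiset.map_map] at hroots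
  exact Multiset.map_injective RCLike.ofReal_injective hroots

theorem Matrix.isHermitian_of_sum_mul_star {α β R : Type*} [Fintype β] [NonUnitalSemiring R]
    [StarRing R] (ψ : α × β → R) :
    (Matrix.of fun a a' => ∑ b, ψ (a, b) * star (ψ (a', b))).IsHermitian := by
  convert isHermitian_mul_conjTranspose_self (Matrix.of fun a b => ψ (a, b)) using 1
  ext a a'
  simp [mul_apply]

def boolPairEquivFin4 : Bool × Bool ≃ Fin 4 where
  toFun p := ⟨2 * p.1.toNat + p.2.toNat, by cases p.1 <;> cases p.2 <;> decide⟩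
  invFun := ![(false, false), (false, true), (true, false), (true, true)]
  left_inv := by decide
  right_inv := by decide

def rhoMatrix (ω : ℝ) : Matrix (Fin 4) (Fin 4) ℂ :=
  !![1/4, 1/8, 1/8, 0;
     1/8, 1/4, 0, Complex.exp (-(Complex.I * ω)) / 8;
     1/8, 0, 1/4, 1/8;
     0, Complex.exp (Complex.I * ω) / 8, 1/8, 1/4]

theorem reindex_rhoApsi' (ω : ℝ) :
    reindex boolPairEquivFin4 boolPairEquivFin4 (rhoApsi' ω) = rhoMatrix ω := by
  have hsqrt : ((Real.sqrt 2 : ℝ) : ℂ) ^ 2 = 2 := by norm_cast; simp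
  have hconj : starRingEnd ℂ (Complex.exp (Complex.I * ω)) = Complex.exp (-(Complex.I * ω)) := by
    rw [← Complex.exp_conj]; simp
  have hexp : Complex.exp (Complex.I * ω) * Complex.exp (-(Complex.I * ω)) = 1 := by
    rw [← Complex.exp_add]; simp
  ext i j
  fin_cases i <;> fin_cases j <;>
    simp [rhoApsi', psi', rhoMatrix, boolPairEquivFin4, Fintype.sum_prod_type, hconj] <;>
    field_simp <;> simp [hsqrt, hexp] <;> norm_num

theorem eval_charpoly_rhoMatrix (ω : ℝ) (x : ℂ) :
    (rhoMatrix ω).charpoly.eval x =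
      (x - 1 / 4) ^ 4 - (x - 1 / 4) ^ 2 / 16 + (1 - Real.cos ω) / 2048 := by
  have hexp : Complex.exp (Complex.I * ω) * Complex.exp (-(Complex.I * ω)) = 1 := by
    rw [← Complex.exp_add]; simp
  have hcos : 2 * Complex.cos ω = Complex.exp (Complex.I * ω) + Complex.exp (-(Complex.I * ω)) := by
    rw [Complex.two_cos, neg_mul, mul_comm (ω : ℂ)]
  rw [eval_charpoly]
  simp [rhoMatrix, Matrix.det_succ_row_zero, Fin.sum_univ_succ, Fin.succAbove]
  linear_combination (-3 / 4096 + x / 128 - x ^ 2 / 64) * hexp + hcos / 4096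

theorem Complex.cos_four_mul (x : ℂ) : cos (4 * x) = 1 - 8 * sin x ^ 2 * cos x ^ 2 := by
  rw [show 4 * x = 2 * (2 * x) by ring, cos_two_mul, cos_sq', sin_two_mul]
  ring

theorem charpoly_rhoMatrix (ω : ℝ) :
    (rhoMatrix ω).charpoly =
      (({(1 / 4) * (1 + Real.cos (ω / 4)), (1 / 4) * (1 - Real.cos (ω / 4)),
          (1 / 4) * (1 + Real.sin (ω / 4)), (1 / 4) * (1 - Real.sin (ω / 4))} :
          Multiset ℝ).map fun r : ℝ => X - C (r : ℂ)).prod := by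
  refine Polynomial.funext fun x => ?_
  have hcos : Complex.cos ω = 1 - 8 * Complex.sin (ω / 4) ^ 2 * Complex.cos (ω / 4) ^ 2 := by
    rw [← Complex.cos_four_mul]; ring_nf
  have hpyth := Complex.sin_sq_add_cos_sq (ω / 4)
  rw [eval_charpoly_rhoMatrix]
  simp [Multiset.insert_eq_cons]
  linear_combination (-1 / 2048) * hcos + (x - 1 / 4) ^ 2 / 16 * hpyth

/-- The eigenvalues of `ρ_A`, counted with multiplicity, are
`{(1/4)(1±cos(ω/4)), (1/4)(1±sin(ω/4))}`. -/
theorem eigenvalues_rhoApsi' (ω : ℝ) :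
    ∃ h : (rhoApsi' ω).IsHermitian,
      Multiset.map h.eigenvalues Finset.univ.val =
        ({(1 / 4) * (1 + Real.cos (ω / 4)), (1 / 4) * (1 - Real.cos (ω / 4)),
          (1 / 4) * (1 + Real.sin (ω / 4)), (1 / 4) * (1 - Real.sin (ω / 4))} :
          Multiset ℝ) := by
  refine ⟨isHermitian_of_sum_mul_star (psi' ω), ?_⟩
  apply IsHermitian.eigenvalues_eq_of_charpoly_eq
  rw [← charpoly_reindex boolPairEquivFin4, reindex_rhoApsi']
  exact charpoly_rhoMatrix ω
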